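/- Let x > 1 be an irrational number with regular continued fraction expansion [a₀, a₁, a₂, ...], and suppose that for some n ≥ 1 we have 2 ≤ a_{n+1} ≤ aₙ + 1. Let p'/q' (in lowest terms, p', q' > 0) be the value of the finite continued fraction [a₀, a₁, ..., a_{n-1}, aₙ + 1]. Then |x - p'/q'| < x/(p' q'). -/

import Mathlib

/-- Partial quotients of the regular continued fraction of `x`:
`cfa x 0 = ⌊x⌋`, and `cfa x (n+1)` are the partial quotients of `1/(x - ⌊x⌋)`. -/
noncomputable def cfa (x : ℝ) : ℕ → ℤ
  | 0 => ⌊x⌋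
  | n + 1 => cfa (x - ⌊x⌋)⁻¹ n

/-- The value of a finite regular continued fraction `[a₀, a₁, …, aₖ]`. -/
noncomputable def cfVal : List ℝ → ℝ
  | [] => 0
  | a :: l => if l = [] then a else a + (cfVal l)⁻¹

/-- The `n`-th regular continued fraction convergent of `x`, i.e. the value of
`[a₀, a₁, …, aₙ]` where the `aᵢ` are the partial quotients of `x`. -/
noncomputable def cfConv (x : ℝ) (n : ℕ) : ℝ :=
  cfVal ((List.range (n + 1)).map fun i => ((cfa x i : ℤ) : ℝ))

/-!
Let `P/Q`, `P'/Q'` be the convergents `pₙ/qₙ`, `pₙ₋₁/qₙ₋₁` and `ξ = [aₙ₊₁, aₙ₊₂, …]` the complete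
quotient, so that `x = (ξP + P')/(ξQ + Q')`. Since `[a₀, …, aₙ + 1] = [a₀, …, aₙ, 1]`, the fraction
`p'/q'` is the mediant `(P + P')/(Q + Q')`, already in lowest terms because `PQ' - P'Q = ±1`.
Hence `|x - p'/q'| = (ξ - 1)/((ξQ + Q')(Q + Q'))`, and the claim reduces to
`(ξ - 1)(P + P') < ξP + P'`, i.e. `ξP' < P + 2P'`. This follows from `ξ < aₙ₊₁ + 1 ≤ aₙ + 2`
and `P = aₙP' + pₙ₋₂ ≥ aₙP'`.
-/

noncomputable def completeQuot (x : ℝ) : ℕ → ℝ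
  | 0 => x
  | n + 1 => completeQuot (x - ⌊x⌋)⁻¹ n

section CompleteQuot

variable (x : ℝ)

theorem cfa_eq_floor_completeQuot (k : ℕ) : cfa x k = ⌊completeQuot x k⌋ := by
  induction k generalizing x with
  | zero => rfl
  | succ k ih => exact ih _

theorem completeQuot_succ (k : ℕ) :
    completeQuot x (k + 1) = (completeQuot x k - ⌊completeQuot x k⌋)⁻¹ := by
  induction k generalizing x with
  | zero => rfl
  | succ k ih => exact ih _

theorem completeQuot_eq_cfa_add_inv (k : ℕ) :
    completeQuot x k = cfa x k + (completeQuot x (k + 1))⁻¹ := by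
  rw [completeQuot_succ, inv_inv, cfa_eq_floor_completeQuot]
  ring

theorem completeQuot_lt_cfa_add_one (k : ℕ) : completeQuot x k < cfa x k + 1 := by
  rw [cfa_eq_floor_completeQuot]
  exact Int.lt_floor_add_one _

variable {x}

theorem irrational_completeQuot (hx : Irrational x) (k : ℕ) : Irrational (completeQuot x k) := by
  induction k with
  | zero => exact hx
  | succ k ih => rw [completeQuot_succ]; exact (ih.sub_intCast _).inv

theorem one_lt_completeQuot_succ (hx : Irrational x) (k : ℕ) :
    1 < completeQuot x (k + 1) := by
  have hfract : 0 < Int.fract (completeQuot x k) :=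
    Int.fract_pos.2 ((irrational_completeQuot hx k).ne_int _)
  rw [completeQuot_succ, Int.self_sub_floor, one_lt_inv₀ hfract]
  exact Int.fract_lt_one _

theorem one_le_cfa (hx : Irrational x) (hx1 : 1 < x) (k : ℕ) : 1 ≤ cfa x k := by
  rw [cfa_eq_floor_completeQuot, Int.le_floor, Int.cast_one]
  cases k with
  | zero => exact hx1.le
  | succ k => exact (one_lt_completeQuot_succ hx k).le

end CompleteQuot

theorem cfVal_append_pair (l : List ℝ) (b t : ℝ) :
    cfVal (l ++ [b, t]) = cfVal (l ++ [b + t⁻¹]) := by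
  induction l with
  | nil => simp [cfVal]
  | cons c l ih => simp [cfVal, ih]

theorem cfVal_map_cfa_append_completeQuot (x : ℝ) (n : ℕ) :
    cfVal (((List.range n).map fun i => ((cfa x i : ℤ) : ℝ)) ++ [completeQuot x n]) = x := by
  induction n with
  | zero => simp [cfVal, completeQuot]
  | succ n ih =>
    rw [List.range_succ, List.map_append, List.map_singleton, List.append_assoc,
      List.singleton_append, cfVal_append_pair, ← completeQuot_eq_cfa_add_inv, ih]

/-- `contNum a (k + 2)` and `contDen a (k + 2)` are the numerator and denominator of
`[a 0, …, a k]`; the indices are shifted by two so that `(p₋₂, p₋₁) = (0, 1)` and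
`(q₋₂, q₋₁) = (1, 0)` start the recursion. -/
def contNum (a : ℕ → ℤ) : ℕ → ℤ
  | 0 => 0
  | 1 => 1
  | k + 2 => a k * contNum a (k + 1) + contNum a k

def contDen (a : ℕ → ℤ) : ℕ → ℤ
  | 0 => 1
  | 1 => 0
  | k + 2 => a k * contDen a (k + 1) + contDen a k

/-- The value of `[a 0, …, a (k - 1), t]`. -/
noncomputable def contVal (a : ℕ → ℤ) (k : ℕ) (t : ℝ) : ℝ :=
  (t * contNum a (k + 1) + contNum a k) / (t * contDen a (k + 1) + contDen a k)

section Continuants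

variable {a : ℕ → ℤ}

theorem contNum_nonneg (ha : ∀ i, 0 ≤ a i) : ∀ k, 0 ≤ contNum a k
  | 0 => le_rfl
  | 1 => zero_le_one
  | k + 2 => add_nonneg (mul_nonneg (ha k) (contNum_nonneg ha (k + 1))) (contNum_nonneg ha k)

theorem contDen_nonneg (ha : ∀ i, 0 ≤ a i) : ∀ k, 0 ≤ contDen a k
  | 0 => zero_le_one
  | 1 => le_rfl
  | k + 2 => add_nonneg (mul_nonneg (ha k) (contDen_nonneg ha (k + 1))) (contDen_nonneg ha k)

theorem one_le_contNum (ha : ∀ i, 1 ≤ a i) : ∀ k, 1 ≤ contNum a (k + 1)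
  | 0 => le_rfl
  | k + 1 => by
    rw [contNum]
    nlinarith [ha k, one_le_contNum ha k, contNum_nonneg (fun i => zero_le_one.trans (ha i)) k]

theorem one_le_contDen (ha : ∀ i, 1 ≤ a i) : ∀ k, 1 ≤ contDen a (k + 2)
  | 0 => by simp [contDen]
  | k + 1 => by
    rw [contDen]
    nlinarith [ha (k + 1), one_le_contDen ha k,
      contDen_nonneg (fun i => zero_le_one.trans (ha i)) (k + 1)]

theorem contNum_mul_contDen_sub (a : ℕ → ℤ) :
    ∀ k, contNum a (k + 1) * contDen a k - contNum a k * contDen a (k + 1) = (-1) ^ k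
  | 0 => by simp [contNum, contDen]
  | k + 1 => by
    rw [contNum, contDen, pow_succ, ← contNum_mul_contDen_sub a k]
    ring

theorem isCoprime_contNum_add_contDen_add (a : ℕ → ℤ) (k : ℕ) :
    IsCoprime (contNum a (k + 1) + contNum a k) (contDen a (k + 1) + contDen a k) :=
  ⟨(-1) ^ k * contDen a k, -(-1) ^ k * contNum a k, by
    have hsq : ((-1 : ℤ) ^ k) ^ 2 = 1 := by rw [← pow_mul, mul_comm, pow_mul]; norm_num
    linear_combination (-1) ^ k * contNum_mul_contDen_sub a k + hsq⟩

theorem contVal_succ (a : ℕ → ℤ) (k : ℕ) {t : ℝ} (ht : t ≠ 0) :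
    contVal a (k + 1) t = contVal a k (a k + t⁻¹) := by
  rw [contVal, contVal, ← mul_div_mul_left _ _ ht, contNum, contDen]
  push_cast
  field_simp
  ring

theorem cfVal_map_range_append (ha : ∀ i, 0 ≤ a i) :
    ∀ (m : ℕ) {t : ℝ}, 0 < t →
      cfVal (((List.range m).map fun i => ((a i : ℤ) : ℝ)) ++ [t]) = contVal a m t
  | 0, t, _ => by simp [cfVal, contVal, contNum, contDen]
  | m + 1, t, ht => by
    have hat : 0 < (a m : ℝ) + t⁻¹ := by
      have : (0 : ℝ) ≤ a m := by exact_mod_cast ha m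
      positivity
    rw [List.range_succ, List.map_append, List.map_singleton, List.append_assoc,
      List.singleton_append, cfVal_append_pair, cfVal_map_range_append ha m hat,
      contVal_succ a m ht.ne']

theorem eq_contNum_add_and_eq_contDen_add_of_div_eq_contVal_one (ha : ∀ i, 1 ≤ a i) (k : ℕ)
    {p q : ℤ} (hq : 0 < q) (hpq : Int.gcd p q = 1) (h : (p : ℝ) / q = contVal a (k + 1) 1) :
    p = contNum a (k + 2) + contNum a (k + 1) ∧ q = contDen a (k + 2) + contDen a (k + 1) := by
  have hden : 0 < contDen a (k + 2) + contDen a (k + 1) :=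
    add_pos_of_pos_of_nonneg (one_le_contDen ha k)
      (contDen_nonneg (fun i => zero_le_one.trans (ha i)) _)
  have h' : (p : ℝ) / q = ((contNum a (k + 2) + contNum a (k + 1) : ℤ) : ℝ)
      / ((contDen a (k + 2) + contDen a (k + 1) : ℤ) : ℝ) := by
    rw [h, contVal, one_mul, one_mul]
    push_cast
    rfl
  exact Rat.div_int_inj hq hden hpq
    (Int.isCoprime_iff_gcd_eq_one.1 (isCoprime_contNum_add_contDen_add a (k + 1)))
    (by exact_mod_cast h')

end Continuants

theorem abs_sub_mediant_lt {ξ P P' Q Q' : ℝ} (hdet : |P * Q' - P' * Q| = 1) (hξ : 1 ≤ ξ)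
    (hP : 0 ≤ P) (hP' : 0 < P') (hQ : 0 < Q) (hQ' : 0 ≤ Q') (hξP : ξ * P' < P + 2 * P') :
    |(ξ * P + P') / (ξ * Q + Q') - (P + P') / (Q + Q')|
      < (ξ * P + P') / (ξ * Q + Q') / ((P + P') * (Q + Q')) := by
  have hD : 0 < ξ * Q + Q' := by nlinarith
  have hE : 0 < Q + Q' := by positivity
  have herr : |(ξ * P + P') / (ξ * Q + Q') - (P + P') / (Q + Q')|
      = (ξ - 1) / ((ξ * Q + Q') * (Q + Q')) := by
    rw [div_sub_div _ _ hD.ne' hE.ne', abs_div, abs_of_pos (mul_pos hD hE),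
      show (ξ * P + P') * (Q + Q') - (ξ * Q + Q') * (P + P') = (ξ - 1) * (P * Q' - P' * Q) by ring,
      abs_mul, hdet, abs_of_nonneg (sub_nonneg.2 hξ), mul_one]
  have hnum : (ξ - 1) * (P + P') < ξ * P + P' := by linarith
  rw [herr, div_div, div_lt_div_iff₀ (mul_pos hD hE) (by positivity)]
  nlinarith [mul_lt_mul_of_pos_left hnum (mul_pos hD hE)]

theorem abs_contVal_sub_contVal_one_lt {a : ℕ → ℤ} (ha : ∀ i, 1 ≤ a i) (k : ℕ) {ξ : ℝ}
    (hξ : 1 ≤ ξ) (hξa : ξ < a k + 2) :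
    |contVal a (k + 1) ξ - contVal a (k + 1) 1| < contVal a (k + 1) ξ /
      ((contNum a (k + 2) + contNum a (k + 1)) * (contDen a (k + 2) + contDen a (k + 1))) := by
  have ha₀ : ∀ i, 0 ≤ a i := fun i => zero_le_one.trans (ha i)
  have hdet : |(contNum a (k + 2) : ℝ) * contDen a (k + 1) - contNum a (k + 1) * contDen a (k + 2)|
      = 1 := by
    rw [← Int.cast_mul, ← Int.cast_mul, ← Int.cast_sub, contNum_mul_contDen_sub]
    simp
  have hpk : (0 : ℝ) ≤ contNum a k := by exact_mod_cast contNum_nonneg ha₀ k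
  have hP' : (1 : ℝ) ≤ contNum a (k + 1) := by exact_mod_cast one_le_contNum ha k
  have hξP : ξ * contNum a (k + 1) < contNum a (k + 2) + 2 * contNum a (k + 1) := by
    have hrec : (contNum a (k + 2) : ℝ) = a k * contNum a (k + 1) + contNum a k := by
      simp only [contNum]; push_cast; ring
    nlinarith
  rw [contVal, contVal, one_mul, one_mul]
  exact abs_sub_mediant_lt hdet hξ (by exact_mod_cast contNum_nonneg ha₀ _) (by linarith)
    (by exact_mod_cast one_le_contDen ha k) (by exact_mod_cast contDen_nonneg ha₀ _) hξP

theorem stmt_10_general (x : ℝ) (hx : Irrational x) (hx1 : 1 < x) (n : ℕ)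
    (h2 : cfa x (n + 1) ≤ cfa x n + 1)
    (p' q' : ℤ) (hq' : 0 < q') (hcop : Int.gcd p' q' = 1)
    (hval : (p' : ℝ) / q' =
      cfVal (((List.range n).map fun i => ((cfa x i : ℤ) : ℝ)) ++ [((cfa x n + 1 : ℤ) : ℝ)])) :
    |x - (p' : ℝ) / q'| < x / ((p' : ℝ) * q') := by
  set a := cfa x
  have ha : ∀ i, 1 ≤ a i := one_le_cfa hx hx1
  have ha₀ : ∀ i, 0 ≤ a i := fun i => zero_le_one.trans (ha i)
  set ξ := completeQuot x (n + 1)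
  have hξ : 1 < ξ := one_lt_completeQuot_succ hx n
  have hξa : ξ < a n + 2 := by
    have := completeQuot_lt_cfa_add_one x (n + 1)
    have : (a (n + 1) : ℝ) ≤ a n + 1 := by exact_mod_cast h2
    linarith
  have hx_eq : contVal a (n + 1) ξ = x := by
    rw [← cfVal_map_range_append ha₀ (n + 1) (by linarith), cfVal_map_cfa_append_completeQuot]
  have hmediant : (p' : ℝ) / q' = contVal a (n + 1) 1 := by
    have ht : (0 : ℝ) < a n + 1 := by exact_mod_cast (ha₀ n).trans_lt (lt_add_one _)
    rw [hval, contVal_succ a n one_ne_zero, inv_one, ← cfVal_map_range_append ha₀ n ht,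
      Int.cast_add, Int.cast_one]
  rw [hmediant, ← hx_eq]
  obtain ⟨rfl, rfl⟩ := eq_contNum_add_and_eq_contDen_add_of_div_eq_contVal_one ha n hq' hcop hmediant
  push_cast
  exact abs_contVal_sub_contVal_one_lt ha n hξ.le hξa

theorem stmt_10 (x : ℝ) (hx : Irrational x) (hx1 : 1 < x) (n : ℕ) (hn : 1 ≤ n)
    (h1 : 2 ≤ cfa x (n + 1)) (h2 : cfa x (n + 1) ≤ cfa x n + 1)
    (p' q' : ℤ) (hp' : 0 < p') (hq' : 0 < q') (hcop : Int.gcd p' q' = 1)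
    (hval : (p' : ℝ) / q' =
      cfVal (((List.range n).map fun i => ((cfa x i : ℤ) : ℝ)) ++ [((cfa x n + 1 : ℤ) : ℝ)])) :
    |x - (p' : ℝ) / q'| < x / ((p' : ℝ) * q') :=
  stmt_10_general x hx hx1 n h2 p' q' hq' hcop hval
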